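/- Let λ > 0, ε > 0 and y ≥ 0, and define d : ℝ → ℝ by d(t) = (λt)³/6 − ((λt)² + 4y)^{3/2}/6 + λt·y + (4/3)y^{3/2} − ε·λt. Then the value (4/3)y^{3/2} − 2y√ε + (2/3)ε^{3/2} is the greatest element of the range of d; in particular the supremum of d over ℝ is attained (at t = (y − ε)/(λ√ε)) and equals this value. -/

import Mathlib

private lemma rpow32 (x : ℝ) (hx : 0 ≤ x) : x ^ ((3:ℝ)/2) = Real.sqrt x ^ 3 := by
  rw [Real.sqrt_eq_rpow, ← Real.rpow_natCast (x ^ ((1:ℝ)/2)) 3, ← Real.rpow_mul hx]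
  norm_num

/-- **Maximum of the coordinate summand of the β = 1.5 dual function**:
`d(t) = (λt)³/6 - ((λt)² + 4y)^{3/2}/6 + λty + (4/3)y^{3/2} - ελt` attains its
supremum `(4/3)y^{3/2} - 2y√ε + (2/3)ε^{3/2}` at `t = (y - ε)/(λ√ε)`. -/
theorem stmt_9 (lam ε y : ℝ) (hlam : 0 < lam) (hε : 0 < ε) (hy : 0 ≤ y)
    (d : ℝ → ℝ)
    (hd : ∀ t : ℝ, d t = (lam * t) ^ 3 / 6
        - ((lam * t) ^ 2 + 4 * y) ^ ((3 : ℝ) / 2) / 6 + lam * t * y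
        + (4 / 3) * y ^ ((3 : ℝ) / 2) - ε * (lam * t)) :
    IsGreatest (Set.range d)
      ((4 / 3) * y ^ ((3 : ℝ) / 2) - 2 * y * Real.sqrt ε + (2 / 3) * ε ^ ((3 : ℝ) / 2))
    ∧ (4 / 3) * y ^ ((3 : ℝ) / 2) - 2 * y * Real.sqrt ε + (2 / 3) * ε ^ ((3 : ℝ) / 2)
      = d ((y - ε) / (lam * Real.sqrt ε)) := by
  set e := Real.sqrt ε with he
  have hepos : 0 < e := Real.sqrt_pos.mpr hε
  have he2 : e ^ 2 = ε := Real.sq_sqrt hε.le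
  have hε32 : ε ^ ((3:ℝ)/2) = e ^ 3 := rpow32 ε hε.le
  -- the equality at the maximizer
  have heq : (4 / 3) * y ^ ((3 : ℝ) / 2) - 2 * y * e + (2 / 3) * ε ^ ((3 : ℝ) / 2)
      = d ((y - ε) / (lam * e)) := by
    rw [hd]
    have hs : lam * ((y - ε) / (lam * e)) = (y - ε) / e := by
      field_simp
    rw [hs]
    have hu : ((y - ε) / e) ^ 2 + 4 * y = ((y + ε) / e) ^ 2 := by
      field_simp
      nlinarith [he2]
    have hu3 : (((y + ε) / e) ^ 2) ^ ((3:ℝ)/2) = ((y + ε) / e) ^ 3 := by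
      rw [rpow32 _ (by positivity), Real.sqrt_sq (by positivity)]
    rw [hu, hu3, hε32, ← he2]
    field_simp
    ring
  refine ⟨⟨⟨(y - ε) / (lam * e), heq.symm⟩, ?_⟩, heq⟩
  rintro v ⟨t, rfl⟩
  rw [hd]
  set s := lam * t with hsdef
  set u := Real.sqrt (s ^ 2 + 4 * y) with hu
  have hu0 : 0 ≤ u := Real.sqrt_nonneg _
  have hu2 : u ^ 2 = s ^ 2 + 4 * y := Real.sq_sqrt (by positivity)
  have habs : |s| ≤ u := by
    rw [hu, ← Real.sqrt_sq_eq_abs]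
    exact Real.sqrt_le_sqrt (by linarith)
  have hus : s ≤ u := (le_abs_self s).trans habs
  have hus' : -s ≤ u := (neg_le_abs s).trans habs
  rw [rpow32 _ (by positivity : (0:ℝ) ≤ s ^ 2 + 4 * y), ← hu, hε32]
  nlinarith [mul_nonneg (by linarith : (0:ℝ) ≤ u + s) (sq_nonneg ((u - s)/2 - e)),
    mul_nonneg (sq_nonneg (u - s - 2*e)) (by linarith : (0:ℝ) ≤ u - s + 4*e),
    hu2, he2, hepos.le]
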